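/- arXiv:2011.05085 — 2 statements merged into one kernel-verified Lean document; each statement's English description precedes it below -/
import Mathlib

section
/- Let ℒ be a maximal cross-free family of cuts of a graph on n vertices. Then |ℒ| = 2n − 3. -/
open Finset

/-- Two finite sets overlap if their intersection and both differences are nonempty. -/
def overlap {V : Type*} [DecidableEq V] (X Y : Finset V) : Prop :=
  (X ∩ Y).Nonempty ∧ (X \ Y).Nonempty ∧ (Y \ X).Nonempty

/-- Two shores cross if all four corner sets are nonempty. -/
def crossing {V : Type*} [DecidableEq V] [Fintype V] (X Y : Finset V) : Prop :=
  (X ∩ Y).Nonempty ∧ (X \ Y).Nonempty ∧ (Y \ X).Nonempty ∧ (Xᶜ ∩ Yᶜ).Nonempty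

/-- X is the shore of a cut: nonempty and proper. -/
def isCutShore {V : Type*} [Fintype V] (X : Finset V) : Prop :=
  X.Nonempty ∧ X ≠ Finset.univ

/-- The weight of the cut Δ(X) in the weighted graph with (symmetric) weights w. -/
noncomputable def cutWeight {V : Type*} [DecidableEq V] [Fintype V]
    (w : V → V → ℝ) (X : Finset V) : ℝ :=
  (1/2) * ∑ p : V × V,
    if (p.1 ∈ X ∧ p.2 ∉ X) ∨ (p.2 ∈ X ∧ p.1 ∉ X) then w p.1 p.2 else 0

/-- Δ(X) is a minimum cut. -/
def isMinCut {V : Type*} [DecidableEq V] [Fintype V] (w : V → V → ℝ) (X : Finset V) : Prop :=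
  isCutShore X ∧ ∀ Y : Finset V, isCutShore Y → cutWeight w X ≤ cutWeight w Y

/-- The characteristic vector of the cut Δ(X) among the edges (pairs of positive weight). -/
noncomputable def cutVec {V : Type*} [DecidableEq V] [Fintype V]
    (w : V → V → ℝ) (X : Finset V) : V × V → ℝ :=
  fun p => if (((p.1 ∈ X ∧ p.2 ∉ X) ∨ (p.2 ∈ X ∧ p.1 ∉ X)) ∧ 0 < w p.1 p.2) then 1 else 0

/-!
Fix a vertex `v` and represent every cut by its shore avoiding `v`. Two shores avoiding `v` cross
exactly when they overlap, so a maximal cross-free family of cuts becomes a maximal laminar family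
of nonempty subsets of `U = V \ {v}`. Such a family contains `U`; a largest member `A ≠ U` and its
complement `U \ A` split the remaining members into maximal laminar families on `A` and on `U \ A`,
and induction on `U` gives `2|U| - 1 = 2n - 3` members.
-/

section Laminar

variable {V : Type*} [DecidableEq V] {U A C X Y : Finset V} {F : Finset (Finset V)}

theorem not_overlap_of_subset_left (h : X ⊆ Y) : ¬ overlap X Y :=
  fun hXY => hXY.2.1.ne_empty (sdiff_eq_empty_iff_subset.2 h)

theorem not_overlap_of_subset_right (h : Y ⊆ X) : ¬ overlap X Y :=
  fun hXY => hXY.2.2.ne_empty (sdiff_eq_empty_iff_subset.2 h)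

theorem not_overlap_of_disjoint (h : Disjoint X Y) : ¬ overlap X Y :=
  fun hXY => not_disjoint_iff_nonempty_inter.2 hXY.1 h

theorem subset_or_subset_of_not_overlap (h : ¬ overlap X Y) (hXY : (X ∩ Y).Nonempty) :
    X ⊆ Y ∨ Y ⊆ X := by
  by_contra! hsub
  exact h ⟨hXY, sdiff_nonempty.2 hsub.1, sdiff_nonempty.2 hsub.2⟩

structure IsMaximalLaminar (U : Finset V) (F : Finset (Finset V)) : Prop where
  nonempty : ∀ X ∈ F, X.Nonempty
  subset : ∀ X ∈ F, X ⊆ U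
  not_overlap : ∀ X ∈ F, ∀ Y ∈ F, ¬ overlap X Y
  exists_overlap : ∀ S : Finset V, S.Nonempty → S ⊆ U → S ∉ F → ∃ X ∈ F, overlap S X

namespace IsMaximalLaminar

theorem self_mem (hF : IsMaximalLaminar U F) (hU : U.Nonempty) : U ∈ F := by
  by_contra hUF
  obtain ⟨X, hX, hUX⟩ := hF.exists_overlap U hU subset_rfl hUF
  exact not_overlap_of_subset_right (hF.subset X hX) hUX

theorem singleton_mem (hF : IsMaximalLaminar U F) {u : V} (hu : u ∈ U) : {u} ∈ F := by
  by_contra huF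
  obtain ⟨X, -, ⟨x, hx⟩, ⟨y, hy⟩, -⟩ :=
    hF.exists_overlap {u} (singleton_nonempty u) (singleton_subset_iff.2 hu) huF
  simp only [mem_inter, mem_sdiff, mem_singleton] at hx hy
  exact hy.2 (hy.1 ▸ hx.1 ▸ hx.2)

theorem restrict (hF : IsMaximalLaminar U F) (hCU : C ⊆ U) (hC : ∀ X ∈ F, ¬ overlap X C) :
    IsMaximalLaminar C (F.filter (· ⊆ C)) where
  nonempty X hX := hF.nonempty X (mem_filter.1 hX).1
  subset X hX := (mem_filter.1 hX).2
  not_overlap X hX Y hY := hF.not_overlap X (mem_filter.1 hX).1 Y (mem_filter.1 hY).1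
  exists_overlap S hS hSC hSF := by
    obtain ⟨X, hX, hSX⟩ :=
      hF.exists_overlap S hS (hSC.trans hCU) fun h => hSF (mem_filter.2 ⟨h, hSC⟩)
    have hXC : (X ∩ C).Nonempty := hSX.1.mono fun x hx => by
      rw [mem_inter] at hx ⊢
      exact ⟨hx.2, hSC hx.1⟩
    rcases subset_or_subset_of_not_overlap (hC X hX) hXC with hXC | hCX
    · exact ⟨X, mem_filter.2 ⟨hX, hXC⟩, hSX⟩
    · exact absurd hSX (not_overlap_of_subset_left (hSC.trans hCX))

theorem subset_or_subset_sdiff (hF : IsMaximalLaminar U F) (hA : A ∈ F)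
    (hAmax : ∀ X ∈ F.erase U, X.card ≤ A.card) (hX : X ∈ F) (hXU : X ≠ U) :
    X ⊆ A ∨ X ⊆ U \ A := by
  by_cases hXA : Disjoint X A
  · exact Or.inr (subset_sdiff.2 ⟨hF.subset X hX, hXA⟩)
  rcases subset_or_subset_of_not_overlap (hF.not_overlap X hX A hA)
    (not_disjoint_iff_nonempty_inter.1 hXA) with hXA | hAX
  · exact Or.inl hXA
  · exact Or.inl (eq_of_subset_of_card_le hAX (hAmax X (mem_erase.2 ⟨hXU, hX⟩))).symm.subset

theorem card_erase_eq_card_filter_add (hF : IsMaximalLaminar U F) (hAU : A ⊂ U)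
    (hA : A.Nonempty) (hsplit : ∀ X ∈ F, X ≠ U → X ⊆ A ∨ X ⊆ U \ A) :
    (F.erase U).card = (F.filter (· ⊆ A)).card + (F.filter (· ⊆ U \ A)).card := by
  have hdisj : Disjoint (F.filter (· ⊆ A)) (F.filter (· ⊆ U \ A)) := by
    refine disjoint_filter.2 fun X hX hXA hXB => ?_
    obtain ⟨x, hx⟩ := hF.nonempty X hX
    exact (mem_sdiff.1 (hXB hx)).2 (hXA hx)
  rw [← card_union_of_disjoint hdisj, ← filter_or]
  congr 1
  ext X
  simp only [mem_erase, mem_filter]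
  constructor
  · rintro ⟨hXU, hX⟩
    exact ⟨hX, hsplit X hX hXU⟩
  · rintro ⟨hX, hXA | hXB⟩
    · exact ⟨fun hXU => not_subset_of_ssubset hAU (hXU ▸ hXA), hX⟩
    · refine ⟨fun hXU => ?_, hX⟩
      obtain ⟨a, ha⟩ := hA
      exact (mem_sdiff.1 (hXB (hXU ▸ hAU.subset ha))).2 ha

theorem card_eq (hF : IsMaximalLaminar U F) (hU : U.Nonempty) : F.card = 2 * U.card - 1 := by
  induction U using Finset.strongInduction generalizing F with
  | H U ih =>
  have hUF := hF.self_mem hU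
  rcases (F.erase U).eq_empty_or_nonempty with hFU | hFU
  · obtain ⟨u, hu⟩ := hU
    have hF1 : F = {U} := by rw [← insert_erase hUF, hFU]; rfl
    have huU : {u} = U := mem_singleton.1 (hF1 ▸ hF.singleton_mem hu)
    simp [hF1, ← huU]
  obtain ⟨A, hA, hAmax⟩ := exists_max_image (F.erase U) card hFU
  obtain ⟨hAU, hAF⟩ := mem_erase.1 hA
  have hAsub := hF.subset A hAF
  have hAne := hF.nonempty A hAF
  have hBne : (U \ A).Nonempty := sdiff_nonempty.2 fun h => hAU (hAsub.antisymm h)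
  have hsplit := fun X (hX : X ∈ F) => hF.subset_or_subset_sdiff hAF hAmax hX
  have hAU' := ssubset_of_subset_of_ne hAsub hAU
  have hFA := ih A hAU' (hF.restrict hAsub fun X hX => hF.not_overlap X hX A hAF) hAne
  have hFB := ih (U \ A) (sdiff_ssubset hAsub hAne) (hF.restrict sdiff_subset fun X hX => by
    by_cases hXU : X = U
    · exact not_overlap_of_subset_right (hXU ▸ sdiff_subset)
    rcases hsplit X hX hXU with hXA | hXB
    · exact not_overlap_of_disjoint (disjoint_sdiff.mono_left hXA)
    · exact not_overlap_of_subset_left hXB) hBne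
  have hUcard := card_sdiff_add_card_eq_card hAsub
  have hFcard := card_erase_add_one hUF
  have hsplitcard := hF.card_erase_eq_card_filter_add hAU' hAne hsplit
  have hApos := hAne.card_pos
  have hBpos := hBne.card_pos
  omega

end IsMaximalLaminar

end Laminar

section Cuts

variable {V : Type*} [DecidableEq V] [Fintype V] {X Y : Finset V}

theorem crossing_comm : crossing X Y ↔ crossing Y X := by
  simp only [crossing, inter_comm X, inter_comm Xᶜ]
  tauto

theorem crossing_compl_left : crossing Xᶜ Y ↔ crossing X Y := by
  simp only [crossing, compl_compl, sdiff_eq_inter_compl, inter_comm Y]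
  tauto

theorem crossing_compl_right : crossing X Yᶜ ↔ crossing X Y := by
  rw [crossing_comm, crossing_compl_left, crossing_comm]

theorem crossing_iff_overlap_of_notMem {v : V} (hX : v ∉ X) (hY : v ∉ Y) :
    crossing X Y ↔ overlap X Y :=
  ⟨fun h => ⟨h.1, h.2.1, h.2.2.1⟩, fun h => ⟨h.1, h.2.1, h.2.2, v, by simp [hX, hY]⟩⟩

def shoreAvoiding (v : V) (X : Finset V) : Finset V := if v ∈ X then Xᶜ else X

theorem notMem_shoreAvoiding (v : V) (X : Finset V) : v ∉ shoreAvoiding v X := by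
  unfold shoreAvoiding
  split_ifs with h <;> simp [h]

theorem shoreAvoiding_of_notMem {v : V} (h : v ∉ X) : shoreAvoiding v X = X := if_neg h

theorem shoreAvoiding_compl_of_notMem {v : V} (h : v ∉ X) : shoreAvoiding v Xᶜ = X := by
  simp [shoreAvoiding, h]

theorem crossing_shoreAvoiding (v : V) :
    crossing (shoreAvoiding v X) (shoreAvoiding v Y) ↔ crossing X Y := by
  unfold shoreAvoiding
  split_ifs <;> simp only [crossing_compl_left, crossing_compl_right]

theorem eq_or_eq_compl_of_shoreAvoiding_eq {v : V}
    (h : shoreAvoiding v X = shoreAvoiding v Y) : Y = X ∨ Y = Xᶜ := by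
  unfold shoreAvoiding at h
  split_ifs at h
  · exact Or.inl (compl_injective h).symm
  · exact Or.inr h.symm
  · exact Or.inr (eq_compl_comm.1 h)
  · exact Or.inl h.symm

theorem shoreAvoiding_nonempty_of_isCutShore (v : V) (h : isCutShore X) :
    (shoreAvoiding v X).Nonempty := by
  unfold shoreAvoiding
  split_ifs
  · exact nonempty_iff_ne_empty.2 fun hX => h.2 ((compl_eq_empty_iff X).1 hX)
  · exact h.1

theorem isMaximalLaminar_image_shoreAvoiding (v : V) {L : Finset (Finset V)}
    (hshore : ∀ X ∈ L, isCutShore X) (hcrossfree : ∀ X ∈ L, ∀ Y ∈ L, ¬ crossing X Y)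
    (hmax : ∀ X : Finset V, isCutShore X → X ∉ L → Xᶜ ∉ L → ∃ Y ∈ L, crossing X Y) :
    IsMaximalLaminar (univ.erase v) (L.image (shoreAvoiding v)) where
  nonempty := forall_mem_image.2 fun X hX =>
    shoreAvoiding_nonempty_of_isCutShore v (hshore X hX)
  subset := forall_mem_image.2 fun X _ x hx =>
    mem_erase.2 ⟨fun h => notMem_shoreAvoiding v X (h ▸ hx), mem_univ x⟩
  not_overlap := forall_mem_image.2 fun X hX => forall_mem_image.2 fun Y hY hXY =>
    hcrossfree X hX Y hY <| (crossing_shoreAvoiding v).1 <| (crossing_iff_overlap_of_notMem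
      (notMem_shoreAvoiding v X) (notMem_shoreAvoiding v Y)).2 hXY
  exists_overlap S hS hSU hSL := by
    have hvS : v ∉ S := fun h => (mem_erase.1 (hSU h)).1 rfl
    obtain ⟨Y, hY, hSY⟩ := hmax S ⟨hS, fun h => hvS (h ▸ mem_univ v)⟩
      (fun h => hSL (mem_image.2 ⟨S, h, shoreAvoiding_of_notMem hvS⟩))
      (fun h => hSL (mem_image.2 ⟨Sᶜ, h, shoreAvoiding_compl_of_notMem hvS⟩))
    refine ⟨shoreAvoiding v Y, mem_image_of_mem _ hY, ?_⟩
    rw [← crossing_iff_overlap_of_notMem hvS (notMem_shoreAvoiding v Y),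
      ← shoreAvoiding_of_notMem hvS, crossing_shoreAvoiding]
    exact hSY

end Cuts

/-- The family is given by one shore per cut. -/
theorem stmt10 {V : Type*} [DecidableEq V] [Fintype V] (n : ℕ) (hn : 2 ≤ n)
    (hcard : Fintype.card V = n)
    (L : Finset (Finset V))
    (hshore : ∀ X ∈ L, isCutShore X)
    (hdist : ∀ X ∈ L, ∀ Y ∈ L, X ≠ Y → Y ≠ Xᶜ)
    (hcrossfree : ∀ X ∈ L, ∀ Y ∈ L, ¬ crossing X Y)
    (hmax : ∀ X : Finset V, isCutShore X → X ∉ L → Xᶜ ∉ L → ∃ Y ∈ L, crossing X Y) :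
    L.card = 2 * n - 3 := by
  obtain ⟨v⟩ : Nonempty V := Fintype.card_pos_iff.1 (by omega)
  have hinj : Set.InjOn (shoreAvoiding v) L := fun X hX Y hY hXY =>
    (eq_or_eq_compl_of_shoreAvoiding_eq hXY).elim Eq.symm fun hYX =>
      by_contra fun hne => hdist X hX Y hY hne hYX
  have hU : (univ.erase v).Nonempty := by
    rw [← card_pos, card_erase_of_mem (mem_univ v), card_univ]
    omega
  rw [← card_image_of_injOn hinj,
    (isMaximalLaminar_image_shoreAvoiding v hshore hcrossfree hmax).card_eq hU,
    card_erase_of_mem (mem_univ v), card_univ, hcard]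
  omega
end

section
/- For every n ≥ 2, the cut dimension of any weighted undirected graph G on n vertices is at most 2n − 3. -/
open Finset

/-!
Fix a vertex `r` and represent each minimum cut by its shore avoiding `r`. Two such shores
`X`, `Y` that overlap uncross: by submodularity of the cut function, `X ∩ Y` and `X ∪ Y` are
minimum cuts as well, no edge joins `X \ Y` to `Y \ X`, and so
`χ(X) + χ(Y) = χ(X ∩ Y) + χ(X ∪ Y)`. Inducting on the number of members of a maximal laminar
family `ℒ` of shores that `X` overlaps, every `χ(X)` lies in the span of `χ(ℒ)` (Jain's
uncrossing argument). Finally, a laminar family of nonempty subsets of the `n - 1` vertices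
other than `r` has at most `2(n - 1) - 1 = 2n - 3` members.
-/

section Laminar

variable {V : Type*} [DecidableEq V]

theorem not_overlap_iff {A B : Finset V} :
    ¬ overlap A B ↔ Disjoint A B ∨ A ⊆ B ∨ B ⊆ A := by
  simp only [overlap, not_and_or, not_nonempty_iff_eq_empty, sdiff_eq_empty_iff_subset,
    ← disjoint_iff_inter_eq_empty]

theorem overlap_comm {A B : Finset V} : overlap A B ↔ overlap B A := by
  simp only [overlap, inter_comm A B]; tauto

def IsLaminar (ℒ : Finset (Finset V)) : Prop :=
  (ℒ : Set (Finset V)).Pairwise fun A B => ¬ overlap A B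

theorem IsLaminar.subset {ℒ ℳ : Finset (Finset V)} (hℒ : IsLaminar ℒ) (h : ℳ ⊆ ℒ) :
    IsLaminar ℳ :=
  Set.Pairwise.mono (coe_subset.mpr h) hℒ

theorem IsLaminar.card_le {ℒ : Finset (Finset V)} {G : Finset V} (hℒ : IsLaminar ℒ)
    (hsub : ∀ L ∈ ℒ, L.Nonempty ∧ L ⊆ G) : #ℒ ≤ 2 * #G - 1 := by
  induction G using Finset.strongInduction generalizing ℒ with
  | H G ih =>
  obtain rfl | ⟨L₀, hL₀⟩ := ℒ.eq_empty_or_nonempty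
  · simp
  have hG : 0 < #G := card_pos.mpr ((hsub L₀ hL₀).1.mono (hsub L₀ hL₀).2)
  have herase : #ℒ - 1 ≤ #(ℒ.erase G) := pred_card_le_card_erase
  obtain hempty | hne := (ℒ.erase G).eq_empty_or_nonempty
  · rw [hempty, card_empty] at herase
    omega
  -- Split off a maximal proper member `M`; the others lie inside `M` or inside `G \ M`.
  obtain ⟨M, hMmem, hMmax⟩ := (ℒ.erase G).exists_maximal hne
  have hMℒ : M ∈ ℒ := mem_of_mem_erase hMmem
  have hMG : M ⊂ G := ssubset_of_subset_of_ne (hsub M hMℒ).2 (ne_of_mem_erase hMmem)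
  have hM : 0 < #M := card_pos.mpr (hsub M hMℒ).1
  have houtside : ∀ L ∈ ℒ.erase G, ¬ L ⊆ M → L ⊆ G \ M := by
    intro L hL hLM
    rcases not_overlap_iff.mp (hℒ (mem_of_mem_erase hL) hMℒ fun h => hLM (h ▸ subset_rfl))
      with hdisj | hLM' | hML
    · exact subset_sdiff.mpr ⟨(hsub L (mem_of_mem_erase hL)).2, hdisj⟩
    · exact absurd hLM' hLM
    · exact absurd (hMmax hL hML) hLM
  have hinside := ih M hMG (ℒ := {L ∈ ℒ.erase G | L ⊆ M})
    (hℒ.subset ((filter_subset _ _).trans (erase_subset _ _)))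
    fun L hL => ⟨(hsub L (mem_of_mem_erase (mem_filter.mp hL).1)).1, (mem_filter.mp hL).2⟩
  have houter := ih (G \ M) (sdiff_ssubset hMG.subset (card_pos.mp hM))
    (ℒ := {L ∈ ℒ.erase G | ¬ L ⊆ M})
    (hℒ.subset ((filter_subset _ _).trans (erase_subset _ _)))
    fun L hL => ⟨(hsub L (mem_of_mem_erase (mem_filter.mp hL).1)).1,
      houtside L (mem_filter.mp hL).1 (mem_filter.mp hL).2⟩
  have hsplit := card_filter_add_card_filter_not (s := ℒ.erase G) (· ⊆ M)
  have hGM : #(G \ M) = #G - #M := card_sdiff_of_subset hMG.subset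
  have hMG' : #M < #G := card_lt_card hMG
  omega

theorem not_overlap_inter_union {X L M : Finset V} (hXL : overlap X L)
    (hXM : ¬ overlap X M) (hLM : ¬ overlap L M) :
    ¬ overlap (X ∩ L) M ∧ ¬ overlap (X ∪ L) M := by
  obtain ⟨⟨a, ha⟩, -, -⟩ := hXL
  simp only [not_overlap_iff, disjoint_left, subset_iff, mem_inter, mem_union] at *
  rcases hXM with h | h | h <;> rcases hLM with g | g | g <;> grind

theorem exists_isLaminar_maximal (𝒩 : Finset (Finset V)) :
    ∃ ℒ ⊆ 𝒩, IsLaminar ℒ ∧ ∀ X ∈ 𝒩, (∀ L ∈ ℒ, ¬ overlap X L) → X ∈ ℒ := by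
  classical
  obtain ⟨ℒ, hℒ, hmax⟩ := ({ℒ ∈ 𝒩.powerset | IsLaminar ℒ}).exists_maximal
    ⟨∅, mem_filter.mpr ⟨empty_mem_powerset 𝒩, by simp [IsLaminar]⟩⟩
  obtain ⟨hℒ𝒩, hlam⟩ := mem_filter.mp hℒ
  refine ⟨ℒ, mem_powerset.mp hℒ𝒩, hlam, fun X hX hXℒ => ?_⟩
  have hins : insert X ℒ ∈ {ℒ ∈ 𝒩.powerset | IsLaminar ℒ} := by
    refine mem_filter.mpr ⟨mem_powerset.mpr (insert_subset hX (mem_powerset.mp hℒ𝒩)), ?_⟩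
    rw [IsLaminar, coe_insert, Set.pairwise_insert]
    exact ⟨hlam, fun L hL _ => ⟨hXℒ L hL, overlap_comm.not.mp (hXℒ L hL)⟩⟩
  exact hmax hins (subset_insert X ℒ) (mem_insert_self X ℒ)

theorem mem_span_image_of_isLaminar_maximal {R M : Type*} [Ring R] [AddCommGroup M] [Module R M]
    {𝒩 : Finset (Finset V)} {f : Finset V → M}
    (huncross : ∀ X ∈ 𝒩, ∀ Y ∈ 𝒩, overlap X Y →
      X ∩ Y ∈ 𝒩 ∧ X ∪ Y ∈ 𝒩 ∧ f X + f Y = f (X ∩ Y) + f (X ∪ Y))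
    {ℒ : Finset (Finset V)} (hℒ𝒩 : ℒ ⊆ 𝒩) (hlam : IsLaminar ℒ)
    (hmax : ∀ X ∈ 𝒩, (∀ L ∈ ℒ, ¬ overlap X L) → X ∈ ℒ) {X : Finset V} (hX : X ∈ 𝒩) :
    f X ∈ Submodule.span R (f '' ℒ) := by
  classical
  induction hk : #{L ∈ ℒ | overlap X L} using Nat.strong_induction_on generalizing X with
  | _ k ih =>
  by_cases hcross : ∃ L ∈ ℒ, overlap X L
  · obtain ⟨L, hL, hXL⟩ := hcross
    obtain ⟨hI, hU, hf⟩ := huncross X hX L (hℒ𝒩 hL) hXL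
    have hfewer : ∀ A, ¬ overlap A L → (∀ N ∈ ℒ, ¬ overlap X N → ¬ overlap L N → ¬ overlap A N) →
        #{N ∈ ℒ | overlap A N} < k := by
      intro A hAL hA
      have hsub : {N ∈ ℒ | overlap A N} ⊆ {N ∈ ℒ | overlap X N} := by
        intro N hN
        obtain ⟨hNℒ, hAN⟩ := mem_filter.mp hN
        have hNL : L ≠ N := fun h => hAL (h ▸ hAN)
        exact mem_filter.mpr ⟨hNℒ, by_contra fun hXN => hA N hNℒ hXN (hlam hL hNℒ hNL) hAN⟩
      rw [← hk]
      exact card_lt_card ((ssubset_iff_of_subset hsub).mpr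
        ⟨L, mem_filter.mpr ⟨hL, hXL⟩, fun h => hAL (mem_filter.mp h).2⟩)
    have hIL : ¬ overlap (X ∩ L) L := not_overlap_iff.mpr (Or.inr (Or.inl inter_subset_right))
    have hUL : ¬ overlap (X ∪ L) L := not_overlap_iff.mpr (Or.inr (Or.inr subset_union_right))
    rw [eq_sub_of_add_eq hf]
    refine sub_mem (add_mem ?_ ?_) (Submodule.subset_span ⟨L, hL, rfl⟩)
    · exact ih _ (hfewer _ hIL fun N _ hXN hLN => (not_overlap_inter_union hXL hXN hLN).1) hI rfl
    · exact ih _ (hfewer _ hUL fun N _ hXN hLN => (not_overlap_inter_union hXL hXN hLN).2) hU rfl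
  · push Not at hcross
    exact Submodule.subset_span ⟨X, hmax X hX hcross, rfl⟩

end Laminar

section Cuts

variable {V : Type*} [DecidableEq V] [Fintype V] {w : V → V → ℝ}

noncomputable def crossWeight (w : V → V → ℝ) (X Y : Finset V) : ℝ :=
  ∑ p : V × V,
    if (p.1 ∈ X \ Y ∧ p.2 ∈ Y \ X) ∨ (p.1 ∈ Y \ X ∧ p.2 ∈ X \ Y) then w p.1 p.2 else 0

theorem cutWeight_add_cutWeight (w : V → V → ℝ) (X Y : Finset V) :
    cutWeight w X + cutWeight w Y =
      cutWeight w (X ∩ Y) + cutWeight w (X ∪ Y) + crossWeight w X Y := by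
  simp only [cutWeight, crossWeight, mul_sum, ← sum_add_distrib]
  refine sum_congr rfl fun p _ => ?_
  by_cases h1 : p.1 ∈ X <;> by_cases h2 : p.2 ∈ X <;> by_cases h3 : p.1 ∈ Y <;>
    by_cases h4 : p.2 ∈ Y <;> simp [h1, h2, h3, h4] <;> ring

theorem crossWeight_nonneg (hnn : ∀ i j, 0 ≤ w i j) (X Y : Finset V) : 0 ≤ crossWeight w X Y :=
  sum_nonneg fun p _ => by split_ifs <;> simp [hnn]

theorem cutVec_add_cutVec_of_crossWeight_eq_zero (hnn : ∀ i j, 0 ≤ w i j) {X Y : Finset V}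
    (h : crossWeight w X Y = 0) :
    cutVec w X + cutVec w Y = cutVec w (X ∩ Y) + cutVec w (X ∪ Y) := by
  have hzero := (sum_eq_zero_iff_of_nonneg fun p _ => by split_ifs <;> simp [hnn]).mp h
  funext p
  by_cases hw : 0 < w p.1 p.2
  · have hnot : ¬ ((p.1 ∈ X \ Y ∧ p.2 ∈ Y \ X) ∨ (p.1 ∈ Y \ X ∧ p.2 ∈ X \ Y)) := fun hp =>
      hw.ne' (by simpa only [if_pos hp] using hzero p (mem_univ p))
    simp only [Pi.add_apply, cutVec]
    by_cases h1 : p.1 ∈ X <;> by_cases h2 : p.2 ∈ X <;> by_cases h3 : p.1 ∈ Y <;>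
      by_cases h4 : p.2 ∈ Y <;> simp_all
  · simp [cutVec, hw]

theorem isMinCut.inter_union (hnn : ∀ i j, 0 ≤ w i j) {X Y : Finset V}
    (hX : isMinCut w X) (hY : isMinCut w Y) (hinter : (X ∩ Y).Nonempty)
    (hunion : X ∪ Y ≠ univ) :
    isMinCut w (X ∩ Y) ∧ isMinCut w (X ∪ Y) ∧
      cutVec w X + cutVec w Y = cutVec w (X ∩ Y) + cutVec w (X ∪ Y) := by
  have hI : isCutShore (X ∩ Y) :=
    ⟨hinter, fun h => hX.1.2 (univ_subset_iff.mp (h ▸ inter_subset_left))⟩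
  have hU : isCutShore (X ∪ Y) := ⟨hX.1.1.mono subset_union_left, hunion⟩
  have hXY := hX.2 Y hY.1
  have hYX := hY.2 X hX.1
  have hXI := hX.2 _ hI
  have hXU := hX.2 _ hU
  have hsubmod := cutWeight_add_cutWeight w X Y
  have hcross := crossWeight_nonneg hnn X Y
  refine ⟨⟨hI, fun Z hZ => ?_⟩, ⟨hU, fun Z hZ => ?_⟩,
    cutVec_add_cutVec_of_crossWeight_eq_zero hnn (by linarith)⟩
  · linarith [hX.2 Z hZ]
  · linarith [hX.2 Z hZ]

theorem cutWeight_compl (w : V → V → ℝ) (X : Finset V) : cutWeight w Xᶜ = cutWeight w X := by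
  simp only [cutWeight, mem_compl]
  congr 1
  exact sum_congr rfl fun p _ => if_congr (by tauto) rfl rfl

theorem cutVec_compl (w : V → V → ℝ) (X : Finset V) : cutVec w Xᶜ = cutVec w X :=
  funext fun p => if_congr (by simp only [mem_compl]; tauto) rfl rfl

theorem isMinCut.compl {X : Finset V} (hX : isMinCut w X) : isMinCut w Xᶜ :=
  ⟨⟨nonempty_iff_ne_empty.mpr fun h => hX.1.2 ((compl_eq_empty_iff X).mp h),
      fun h => hX.1.1.ne_empty ((compl_eq_univ_iff X).mp h)⟩,
    fun Z hZ => cutWeight_compl w X ▸ hX.2 Z hZ⟩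

theorem finrank_span_cutVec_isMinCut_le [Nonempty V] (hnn : ∀ i j, 0 ≤ w i j) :
    Module.finrank ℝ (Submodule.span ℝ {v | ∃ X : Finset V, isMinCut w X ∧ v = cutVec w X})
      ≤ 2 * Fintype.card V - 3 := by
  classical
  obtain ⟨r⟩ := ‹Nonempty V›
  let 𝒩 : Finset (Finset V) := {X | isMinCut w X ∧ r ∉ X}
  have huncross : ∀ X ∈ 𝒩, ∀ Y ∈ 𝒩, overlap X Y → X ∩ Y ∈ 𝒩 ∧ X ∪ Y ∈ 𝒩 ∧
        cutVec w X + cutVec w Y = cutVec w (X ∩ Y) + cutVec w (X ∪ Y) := by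
    intro X hX Y hY hXY
    simp only [𝒩, mem_filter, mem_univ, true_and] at hX hY ⊢
    have hrU : r ∉ X ∪ Y := by simp [hX.2, hY.2]
    obtain ⟨hI, hU, hvec⟩ := hX.1.inter_union hnn hY.1 hXY.1 fun h => hrU (h ▸ mem_univ r)
    exact ⟨⟨hI, by simp [hX.2]⟩, ⟨hU, hrU⟩, hvec⟩
  obtain ⟨ℒ, hℒ𝒩, hlam, hmax⟩ := exists_isLaminar_maximal 𝒩
  have hspan : Submodule.span ℝ {v | ∃ X : Finset V, isMinCut w X ∧ v = cutVec w X} ≤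
      Submodule.span ℝ (cutVec w '' ℒ) := by
    rw [Submodule.span_le]
    rintro _ ⟨X, hX, rfl⟩
    -- `X` and `Xᶜ` have the same cut vector, so we may take the shore avoiding `r`.
    wlog hr : r ∉ X generalizing X
    · exact cutVec_compl w X ▸ this Xᶜ hX.compl (by simpa using hr)
    exact mem_span_image_of_isLaminar_maximal huncross hℒ𝒩 hlam hmax (by simp [𝒩, hX, hr])
  have hbound : #ℒ ≤ 2 * #(univ.erase r) - 1 := hlam.card_le fun L hL => by
    obtain ⟨hL, hrL⟩ := (mem_filter.mp (hℒ𝒩 hL)).2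
    exact ⟨hL.1.1, fun x hx => mem_erase.mpr ⟨fun hxr => hrL (hxr ▸ hx), mem_univ x⟩⟩
  rw [card_erase_of_mem (mem_univ r), card_univ] at hbound
  calc Module.finrank ℝ (Submodule.span ℝ {v | ∃ X : Finset V, isMinCut w X ∧ v = cutVec w X})
      ≤ Module.finrank ℝ (Submodule.span ℝ (cutVec w '' ℒ)) := Submodule.finrank_mono hspan
    _ ≤ #(ℒ.image (cutVec w)) := coe_image (f := cutVec w) ▸ finrank_span_finset_le_card _
    _ ≤ 2 * Fintype.card V - 3 := card_image_le.trans (by omega)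

end Cuts

theorem stmt11_general {V : Type*} [DecidableEq V] [Fintype V] (n : ℕ)
    (hcard : Fintype.card V = n)
    (w : V → V → ℝ) (hnn : ∀ i j, 0 ≤ w i j) :
    Module.finrank ℝ (Submodule.span ℝ
      {v : V × V → ℝ | ∃ X : Finset V, isMinCut w X ∧ v = cutVec w X}) ≤ 2 * n - 3 := by
  subst hcard
  rcases isEmpty_or_nonempty V with hV | hV
  · have hnone : {v : V × V → ℝ | ∃ X : Finset V, isMinCut w X ∧ v = cutVec w X} = ∅ :=
      Set.eq_empty_of_forall_notMem fun _ ⟨X, hX, _⟩ => hX.1.1.ne_empty (Subsingleton.elim _ _)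
    simp [hnone]
  · exact finrank_span_cutVec_isMinCut_le hnn

/-- Main upper bound: the cut dimension of any weighted graph on `n ≥ 2` vertices is at
most `2n - 3`. -/
theorem stmt11 {V : Type*} [DecidableEq V] [Fintype V] (n : ℕ) (hn : 2 ≤ n)
    (hcard : Fintype.card V = n)
    (w : V → V → ℝ) (hsym : ∀ i j, w i j = w j i) (hnn : ∀ i j, 0 ≤ w i j) :
    Module.finrank ℝ (Submodule.span ℝ
      {v : V × V → ℝ | ∃ X : Finset V, isMinCut w X ∧ v = cutVec w X}) ≤ 2 * n - 3 :=
  stmt11_general n hcard w hnn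
end
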